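/- arXiv:1808.03542 — 2 statements merged into one kernel-verified Lean document; each statement's English description precedes it below -/
import Mathlib

section
/- For A ∈ B(X), if iso σ_{aw}(A) ∩ (σ_{uBw}(A))^c = ∅ (i.e., Φ^{iso}_{uBw}(A) = ∅), then σ_w(A) = σ_{Bw}(A). -/
open Filter Metric Set Asymptotics Topology

namespace Paper

variable {X : Type*} [NormedAddCommGroup X] [NormedSpace ℂ X] [CompleteSpace X]

/-- The ascent of an operator: the least `n` with `ker Tⁿ = ker Tⁿ⁺¹`, `⊤` if none exists. -/
noncomputable def ascent (T : X →L[ℂ] X) : ℕ∞ :=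
  sInf ((↑) '' {n : ℕ | LinearMap.ker ((T ^ n : X →L[ℂ] X) : X →ₗ[ℂ] X) = LinearMap.ker ((T ^ (n + 1) : X →L[ℂ] X) : X →ₗ[ℂ] X)})

/-- The descent of an operator: the least `n` with `range Tⁿ = range Tⁿ⁺¹`, `⊤` if none exists. -/
noncomputable def descent (T : X →L[ℂ] X) : ℕ∞ :=
  sInf ((↑) '' {n : ℕ | LinearMap.range ((T ^ n : X →L[ℂ] X) : X →ₗ[ℂ] X) = LinearMap.range ((T ^ (n + 1) : X →L[ℂ] X) : X →ₗ[ℂ] X)})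

/-- `T` has the single-valued extension property at `z₀`. -/
def HasSVEPAt (T : X →L[ℂ] X) (z₀ : ℂ) : Prop :=
  ∀ r > (0 : ℝ), ∀ f : ℂ → X, AnalyticOnNhd ℂ f (ball z₀ r) →
    (∀ z ∈ ball z₀ r, T (f z) - z • f z = 0) → ∀ z ∈ ball z₀ r, f z = 0

/-- The approximate point spectrum: points where `T - z` is not bounded below. -/
def aspectrum (T : X →L[ℂ] X) : Set ℂ :=
  {z | ¬ ∃ c > (0 : ℝ), ∀ x : X, c * ‖x‖ ≤ ‖(T - z • 1) x‖}

/-- The isolated points of a set `S ⊆ ℂ`. -/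
def iso (S : Set ℂ) : Set ℂ := {z ∈ S | 𝓝[S \ {z}] z = ⊥}

/-- The set `Π(T)` of poles of the resolvent of `T`. -/
noncomputable def poles (T : X →L[ℂ] X) : Set ℂ :=
  {z ∈ spectrum ℂ T | ascent (T - z • 1) = descent (T - z • 1) ∧ ascent (T - z • 1) ≠ ⊤}

/-- The set `Π^a(T)` of left poles of `T`. -/
noncomputable def leftPoles (T : X →L[ℂ] X) : Set ℂ :=
  {z ∈ aspectrum T | ∃ d : ℕ, ascent (T - z • 1) = (d : ℕ∞) ∧
    IsClosed ((LinearMap.range (((T - z • 1) ^ (d + 1) : X →L[ℂ] X) : X →ₗ[ℂ] X) : Submodule ℂ X) : Set X)}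

/-- `E(T)`: eigenvalues of `T` which are isolated points of the spectrum. -/
def eigE (T : X →L[ℂ] X) : Set ℂ :=
  {z ∈ iso (spectrum ℂ T) | ∃ x : X, x ≠ 0 ∧ T x = z • x}

/-- `E^a(T)`: eigenvalues of `T` which are isolated points of the approximate point spectrum. -/
def eigEa (T : X →L[ℂ] X) : Set ℂ :=
  {z ∈ iso (aspectrum T) | ∃ x : X, x ≠ 0 ∧ T x = z • x}

/-- Fredholm operator. -/
def IsFredholm (T : X →L[ℂ] X) : Prop :=
  FiniteDimensional ℂ (LinearMap.ker (T : X →ₗ[ℂ] X)) ∧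
  IsClosed ((LinearMap.range (T : X →ₗ[ℂ] X) : Submodule ℂ X) : Set X) ∧
  FiniteDimensional ℂ (X ⧸ (LinearMap.range (T : X →ₗ[ℂ] X) : Submodule ℂ X))

/-- The Fredholm index `α(T) - β(T)`. -/
noncomputable def fredIndex (T : X →L[ℂ] X) : ℤ :=
  (Module.finrank ℂ (LinearMap.ker (T : X →ₗ[ℂ] X)) : ℤ) -
    (Module.finrank ℂ (X ⧸ (LinearMap.range (T : X →ₗ[ℂ] X) : Submodule ℂ X)) : ℤ)

/-- The Weyl spectrum `σ_w(T)`. -/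
noncomputable def weylSpec (T : X →L[ℂ] X) : Set ℂ :=
  {z ∈ spectrum ℂ T | ¬ (IsFredholm (T - z • 1) ∧ fredIndex (T - z • 1) = 0)}

/-- Upper semi-Fredholm operator. -/
def IsUpperSemiFredholm (T : X →L[ℂ] X) : Prop :=
  FiniteDimensional ℂ (LinearMap.ker (T : X →ₗ[ℂ] X)) ∧
  IsClosed ((LinearMap.range (T : X →ₗ[ℂ] X) : Submodule ℂ X) : Set X)

/-- `ind T ≤ 0`, allowing an infinite-dimensional cokernel. -/
def indexLE0 (T : X →L[ℂ] X) : Prop :=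
  (Module.finrank ℂ (LinearMap.ker (T : X →ₗ[ℂ] X)) : Cardinal) ≤
    Module.rank ℂ (X ⧸ (LinearMap.range (T : X →ₗ[ℂ] X) : Submodule ℂ X))

/-- The approximate (left) Weyl spectrum `σ_aw(T)`. -/
noncomputable def aweylSpec (T : X →L[ℂ] X) : Set ℂ :=
  {z ∈ aspectrum T | ¬ (IsUpperSemiFredholm (T - z • 1) ∧ indexLE0 (T - z • 1))}

/-- The restriction of `T` to the invariant subspace `range (Tⁿ)`. -/
noncomputable def restr (T : X →L[ℂ] X) (n : ℕ) :
    (LinearMap.range ((T ^ n : X →L[ℂ] X) : X →ₗ[ℂ] X) : Submodule ℂ X) →ₗ[ℂ] (LinearMap.range ((T ^ n : X →L[ℂ] X) : X →ₗ[ℂ] X) : Submodule ℂ X) :=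
  (T : X →ₗ[ℂ] X).restrict (fun x hx => by
    obtain ⟨y, hy⟩ := hx
    refine LinearMap.mem_range.mpr ⟨T y, ?_⟩
    have h : (T ^ n) * T = T * (T ^ n) := ((Commute.refl T).pow_left n).eq
    calc (T ^ n) (T y) = ((T ^ n) * T) y := rfl
      _ = (T * T ^ n) y := by rw [h]
      _ = T ((T ^ n) y) := rfl
      _ = T x := congrArg T hy)

/-- `T` is B-Weyl: for some `n`, `range (Tⁿ)` is closed and the restriction of `T` to it is
Fredholm of index `0`. -/
noncomputable def IsBWeyl (T : X →L[ℂ] X) : Prop :=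
  ∃ n : ℕ, IsClosed ((LinearMap.range ((T ^ n : X →L[ℂ] X) : X →ₗ[ℂ] X) : Submodule ℂ X) : Set X) ∧
    FiniteDimensional ℂ (LinearMap.ker (restr T n)) ∧
    IsClosed ((LinearMap.range (restr T n) :
        Submodule ℂ (LinearMap.range ((T ^ n : X →L[ℂ] X) : X →ₗ[ℂ] X) : Submodule ℂ X)) :
      Set (LinearMap.range ((T ^ n : X →L[ℂ] X) : X →ₗ[ℂ] X) : Submodule ℂ X)) ∧
    FiniteDimensional ℂ
      ((LinearMap.range ((T ^ n : X →L[ℂ] X) : X →ₗ[ℂ] X) : Submodule ℂ X) ⧸ LinearMap.range (restr T n)) ∧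
    Module.finrank ℂ (LinearMap.ker (restr T n)) =
      Module.finrank ℂ ((LinearMap.range ((T ^ n : X →L[ℂ] X) : X →ₗ[ℂ] X) : Submodule ℂ X) ⧸ LinearMap.range (restr T n))

/-- `T` is upper B-Weyl: for some `n`, `range (Tⁿ)` is closed and the restriction of `T` to it is
upper semi-Fredholm of index `≤ 0`. -/
noncomputable def IsUpperBWeyl (T : X →L[ℂ] X) : Prop :=
  ∃ n : ℕ, IsClosed ((LinearMap.range ((T ^ n : X →L[ℂ] X) : X →ₗ[ℂ] X) : Submodule ℂ X) : Set X) ∧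
    FiniteDimensional ℂ (LinearMap.ker (restr T n)) ∧
    IsClosed ((LinearMap.range (restr T n) :
        Submodule ℂ (LinearMap.range ((T ^ n : X →L[ℂ] X) : X →ₗ[ℂ] X) : Submodule ℂ X)) :
      Set (LinearMap.range ((T ^ n : X →L[ℂ] X) : X →ₗ[ℂ] X) : Submodule ℂ X)) ∧
    (Module.finrank ℂ (LinearMap.ker (restr T n)) : Cardinal) ≤
      Module.rank ℂ ((LinearMap.range ((T ^ n : X →L[ℂ] X) : X →ₗ[ℂ] X) : Submodule ℂ X) ⧸ LinearMap.range (restr T n))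

/-- The B-Weyl spectrum `σ_Bw(T)`. -/
noncomputable def bweylSpec (T : X →L[ℂ] X) : Set ℂ :=
  {z ∈ spectrum ℂ T | ¬ IsBWeyl (T - z • 1)}

/-- The upper B-Weyl spectrum `σ_uBw(T)`. -/
noncomputable def ubweylSpec (T : X →L[ℂ] X) : Set ℂ :=
  {z ∈ aspectrum T | ¬ IsUpperBWeyl (T - z • 1)}

/-- `Φ^iso_Bw(T) = iso σ_w(T) ∩ σ_Bw(T)ᶜ`. -/
noncomputable def phiIsoBw (T : X →L[ℂ] X) : Set ℂ := iso (weylSpec T) ∩ (bweylSpec T)ᶜ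

/-- `Φ^iso_uBw(T) = iso σ_aw(T) ∩ σ_uBw(T)ᶜ`. -/
noncomputable def phiIsoUBw (T : X →L[ℂ] X) : Set ℂ := iso (aweylSpec T) ∩ (ubweylSpec T)ᶜ

/-- `T` is polaroid: isolated spectral points are poles. -/
noncomputable def Polaroid (T : X →L[ℂ] X) : Prop := iso (spectrum ℂ T) ⊆ poles T

/-- `T` is left polaroid: isolated points of `σ_a(T)` are left poles. -/
noncomputable def LeftPolaroid (T : X →L[ℂ] X) : Prop := iso (aspectrum T) ⊆ leftPoles T

/-- `T` is a-polaroid: isolated points of `σ_a(T)` are poles. -/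
noncomputable def APolaroid (T : X →L[ℂ] X) : Prop := iso (aspectrum T) ⊆ poles T

/-- Property `(P1)`: `E(T) = Π^a(T)`. -/
noncomputable def P1 (T : X →L[ℂ] X) : Prop := eigE T = leftPoles T

/-- Property `(P2)`: `E^a(T) = Π(T)`. -/
noncomputable def P2 (T : X →L[ℂ] X) : Prop := eigEa T = poles T

/-- The resolvent of `T` has a pole (finite-order singularity) at `z₀`. -/
noncomputable def HasResolventPoleAt (T : X →L[ℂ] X) (z₀ : ℂ) : Prop :=
  z₀ ∈ iso (spectrum ℂ T) ∧ ∃ n : ℕ, 0 < n ∧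
    (fun z => (z - z₀) ^ n • resolvent T z) =O[𝓝[≠] z₀] (fun _ => (1 : ℝ))

/-- A holomorphic (Riesz) functional calculus for `T` on an open neighbourhood `U ⊇ σ(T)`:
an algebra homomorphism on functions holomorphic on `U`, sending `1 ↦ 1`, `id ↦ T`, and
satisfying the spectral mapping theorem for the spectrum and approximate point spectrum. -/
structure HoloCalcOn (T : X →L[ℂ] X) (U : Set ℂ) where
  isOpen : IsOpen U
  spec_subset : spectrum ℂ T ⊆ U
  toFun : (ℂ → ℂ) → (X →L[ℂ] X)
  map_one : toFun (fun _ => 1) = 1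
  map_id : toFun id = T
  map_add : ∀ f g : ℂ → ℂ, AnalyticOnNhd ℂ f U → AnalyticOnNhd ℂ g U →
    toFun (f + g) = toFun f + toFun g
  map_mul : ∀ f g : ℂ → ℂ, AnalyticOnNhd ℂ f U → AnalyticOnNhd ℂ g U →
    toFun (f * g) = toFun f * toFun g
  map_smul : ∀ (c : ℂ) (f : ℂ → ℂ), AnalyticOnNhd ℂ f U → toFun (c • f) = c • toFun f
  spec_map : ∀ f : ℂ → ℂ, AnalyticOnNhd ℂ f U → spectrum ℂ (toFun f) = f '' spectrum ℂ T
  aspec_map : ∀ f : ℂ → ℂ, AnalyticOnNhd ℂ f U → aspectrum (toFun f) = f '' aspectrum T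

/-- `f` is non-constant on each connected component of `σ(T)`. -/
def NonConstOnSpecComponents (T : X →L[ℂ] X) (f : ℂ → ℂ) : Prop :=
  ∀ z ∈ spectrum ℂ T, ∃ w ∈ connectedComponentIn (spectrum ℂ T) z, f w ≠ f z


/-!
Let `A - z` be B-Weyl: for some `n` the range `R` of `(A - z)ⁿ` is closed and `A - z` restricts
to a Weyl operator of `R`. Modulo `R` the operator `A - z` is nilpotent, so for `μ ≠ 0` the
operator `A - z - μ` is bijective modulo `R` and has the same kernel and cokernel as its
restriction to `R`; as Weyl operators are stable under small perturbations, `A - w` is Weyl for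
all `w ≠ z` close to `z`. Hence `z` is isolated in `σ_aw(A)` whenever it lies there, and, since
B-Weyl implies upper B-Weyl, it then lies in `Φ^iso_uBw(A)`. Otherwise `A - z` is upper
semi-Fredholm, and a dimension count along `0 → R → X → X ⧸ R → 0` shows that an upper
semi-Fredholm B-Weyl operator is Weyl. So a B-Weyl `A - z` is Weyl when `Φ^iso_uBw(A) = ∅`.
-/

section LinearAlgebra

open Module LinearMap Submodule

variable {K V W : Type*} [Field K] [AddCommGroup V] [Module K V] [AddCommGroup W] [Module K W]

/-- Fredholm of index zero, forgetting the topology: for a bounded operator on a Banach space the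
closedness of the range then comes for free (`isClosed_range_of_finiteDimensional`). -/
structure IsIndexZero (f : V →ₗ[K] V) : Prop where
  finiteDimensional_ker : FiniteDimensional K f.ker
  finiteDimensional_coker : FiniteDimensional K (V ⧸ f.range)
  finrank_ker_eq : finrank K f.ker = finrank K (V ⧸ f.range)

theorem IsIndexZero.of_finiteDimensional [FiniteDimensional K V] (f : V →ₗ[K] V) :
    IsIndexZero f where
  finiteDimensional_ker := inferInstance
  finiteDimensional_coker := inferInstance
  finrank_ker_eq := by
    have := f.finrank_range_add_finrank_ker
    have := f.range.finrank_quotient_add_finrank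
    omega

theorem IsIndexZero.of_linearEquiv {f : V →ₗ[K] V} {g : W →ₗ[K] W} (hf : IsIndexZero f)
    (eker : f.ker ≃ₗ[K] g.ker) (ecoker : (V ⧸ f.range) ≃ₗ[K] (W ⧸ g.range)) :
    IsIndexZero g :=
  have := hf.finiteDimensional_ker
  have := hf.finiteDimensional_coker
  { finiteDimensional_ker := eker.finiteDimensional
    finiteDimensional_coker := ecoker.finiteDimensional
    finrank_ker_eq := by rw [← eker.finrank_eq, ← ecoker.finrank_eq, hf.finrank_ker_eq] }

theorem IsIndexZero.isUnit_mul {f u : Module.End K V} (hf : IsIndexZero f) (hu : IsUnit u) :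
    IsIndexZero (u * f) := by
  let e := LinearEquiv.ofBijective u ((Module.End.isUnit_iff u).mp hu)
  have hker : LinearMap.ker (u * f) = f.ker := LinearEquiv.ker_comp e f
  have hrange : LinearMap.range (u * f) = f.range.map (e : V →ₗ[K] V) := LinearMap.range_comp f u
  exact hf.of_linearEquiv (LinearEquiv.ofEq _ _ hker.symm)
    ((Submodule.Quotient.equiv _ _ e rfl).trans (Submodule.quotEquivOfEq _ _ hrange.symm))

section Restrict

variable {f : V →ₗ[K] V} {p : Submodule K V}

/-- When `f` induces a bijection of `V ⧸ p`, restricting `f` to `p` changes neither its kernel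
nor its cokernel. -/
theorem isIndexZero_restrict_iff (hf : ∀ x ∈ p, f x ∈ p) (hinj : ∀ x, f x ∈ p → x ∈ p)
    (hsurj : p ⊔ f.range = ⊤) : IsIndexZero (f.restrict hf) ↔ IsIndexZero f := by
  have hker : f.ker ≤ p := fun x hx => hinj x (by rw [mem_ker.mp hx]; exact p.zero_mem)
  let eker : (f.restrict hf).ker ≃ₗ[K] f.ker :=
    (LinearEquiv.ofEq _ _ (LinearMap.ker_restrict hf)).trans (comapSubtypeEquivOfLe hker)
  let ψ := f.range.mkQ ∘ₗ p.subtype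
  have hψ : Function.Surjective ψ := by
    rintro ⟨x⟩
    obtain ⟨y, hy, z, ⟨w, rfl⟩, rfl⟩ := mem_sup.mp (hsurj ▸ mem_top : x ∈ p ⊔ f.range)
    exact ⟨⟨y, hy⟩, (Submodule.Quotient.eq _).mpr ⟨-w, by simp⟩⟩
  have hkerψ : (f.restrict hf).range = ψ.ker := by
    ext ⟨x, hx⟩
    simp only [LinearMap.range_restrict, ψ, ker_comp, ker_mkQ]
    exact ⟨fun ⟨y, _, hy⟩ => ⟨y, hy⟩, fun ⟨y, hy⟩ => ⟨y, hinj y (hy ▸ hx), hy⟩⟩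
  let ecoker : (p ⧸ (f.restrict hf).range) ≃ₗ[K] (V ⧸ f.range) :=
    (quotEquivOfEq _ _ hkerψ).trans (ψ.quotKerEquivOfSurjective hψ)
  exact ⟨fun h => h.of_linearEquiv eker ecoker,
    fun h => h.of_linearEquiv eker.symm ecoker.symm⟩

end Restrict

theorem isIndexZero_one_sub {k : Module.End K V} (hk : FiniteDimensional K k.range) :
    IsIndexZero (1 - k) := by
  have hf : ∀ x ∈ k.range, (1 - k) x ∈ k.range := fun x hx =>
    sub_mem hx (LinearMap.mem_range_self k x)
  refine (isIndexZero_restrict_iff hf (fun x hx => ?_) ?_).mp (.of_finiteDimensional _)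
  · simpa using add_mem hx (LinearMap.mem_range_self k x)
  · refine eq_top_iff.mpr fun x _ => mem_sup.mpr
      ⟨k x, LinearMap.mem_range_self k x, (1 - k) x, LinearMap.mem_range_self _ x, by simp⟩

theorem IsUnit.isIndexZero_sub {u k : Module.End K V} (hu : IsUnit u)
    (hk : FiniteDimensional K k.range) : IsIndexZero (u - k) := by
  obtain ⟨u, rfl⟩ := hu
  have : FiniteDimensional K (LinearMap.range (u⁻¹.val * k)) := by
    rw [Module.End.mul_eq_comp, LinearMap.range_comp]; infer_instance
  convert (isIndexZero_one_sub this).isUnit_mul u.isUnit using 1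
  rw [mul_sub, mul_one, ← mul_assoc, Units.mul_inv, one_mul]

theorem bijective_add_of_isCompl {f : V →ₗ[K] V} {N : Submodule K V} (hN : IsCompl f.range N)
    (P : V →ₗ[K] f.ker) (hP : ∀ x : f.ker, P x = x) (ι : f.ker ≃ₗ[K] N) :
    Function.Bijective (f + N.subtype ∘ₗ ι.toLinearMap ∘ₗ P) := by
  constructor
  · rw [← LinearMap.ker_eq_bot, LinearMap.ker_eq_bot']
    intro x hx
    have hfx : f x = 0 := by
      refine disjoint_def.mp hN.disjoint _ (LinearMap.mem_range_self f x) ?_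
      rw [eq_neg_of_add_eq_zero_left hx]
      exact N.neg_mem (ι (P x)).2
    have hιx : ι (P x) = 0 := by simpa [hfx] using hx
    rw [hP ⟨x, hfx⟩, LinearEquiv.map_eq_zero_iff] at hιx
    exact congrArg Subtype.val hιx
  · intro y
    obtain ⟨_, ⟨a, rfl⟩, n, hn, rfl⟩ := mem_sup.mp (hN.sup_eq_top ▸ mem_top : y ∈ f.range ⊔ N)
    refine ⟨a - P a + ι.symm ⟨n, hn⟩, ?_⟩
    have hPa : f (P a) = 0 := (P a).2
    have hι : f (ι.symm ⟨n, hn⟩) = 0 := (ι.symm ⟨n, hn⟩).2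
    simp [hPa, hι, hP]

theorem exists_commute_mul_sub_smul_eq (f : Module.End K V) (n : ℕ) (μ : K) :
    ∃ q : Module.End K V, Commute q f ∧ q * (f - μ • 1) = f ^ n - μ ^ n • 1 := by
  have hμ : Commute f (μ • 1) := (Commute.one_right f).smul_right μ
  refine ⟨∑ i ∈ Finset.range n, f ^ i * (μ • 1) ^ (n - 1 - i), ?_, ?_⟩
  · exact Commute.sum_left _ _ _ fun i _ =>
      ((Commute.refl f).pow_left i).mul_left (hμ.symm.pow_left _)
  · rw [hμ.geom_sum₂_mul, smul_pow, one_pow]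

section RangePow

variable (f : Module.End K V) (n : ℕ) {μ : K}

theorem mem_range_pow_of_sub_smul_mem (hμ : μ ≠ 0) {x : V} (hx : (f - μ • 1) x ∈ (f ^ n).range) :
    x ∈ (f ^ n).range := by
  obtain ⟨q, hq, hqf⟩ := exists_commute_mul_sub_smul_eq f n μ
  have hqR : ∀ y ∈ (f ^ n).range, q y ∈ (f ^ n).range := by
    rintro _ ⟨y, rfl⟩
    exact ⟨q y, by rw [← Module.End.mul_apply, ← (hq.pow_right n).eq]; rfl⟩
  have : μ ^ n • x = (f ^ n) x - q ((f - μ • 1) x) := by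
    rw [← Module.End.mul_apply, hqf]; simp
  rw [← smul_mem_iff _ (pow_ne_zero n hμ), this]
  exact sub_mem (LinearMap.mem_range_self _ x) (hqR _ hx)

theorem range_pow_sup_range_sub_smul (hμ : μ ≠ 0) : (f ^ n).range ⊔ (f - μ • 1).range = ⊤ := by
  obtain ⟨q, hq, hqf⟩ := exists_commute_mul_sub_smul_eq f n μ
  refine eq_top_iff.mpr fun x _ => ?_
  have : μ ^ n • x = (f ^ n) x - (f - μ • 1) (q x) := by
    rw [← Module.End.mul_apply, ← (hq.sub_right ((Commute.one_right q).smul_right μ)).eq, hqf]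
    simp
  rw [← smul_mem_iff _ (pow_ne_zero n hμ), this]
  exact sub_mem (mem_sup_left (LinearMap.mem_range_self _ x))
    (mem_sup_right (LinearMap.mem_range_self _ _))

end RangePow

theorem finrank_add_finrank_ker_of_exact {A B C : Type*} [AddCommGroup A] [Module K A]
    [AddCommGroup B] [Module K B] [AddCommGroup C] [Module K C] [FiniteDimensional K A]
    [FiniteDimensional K C] {Γ : A →ₗ[K] B} {δ : B →ₗ[K] C} (hexact : Function.Exact Γ δ)
    (hδ : Function.Surjective δ) :
    FiniteDimensional K B ∧ finrank K B + finrank K Γ.ker = finrank K A + finrank K C := by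
  have := Module.Finite.of_exact hexact hδ
  refine ⟨this, ?_⟩
  have hB := δ.finrank_range_add_finrank_ker
  have hA := Γ.finrank_range_add_finrank_ker
  rw [LinearMap.range_eq_top.mpr hδ, finrank_top, (LinearMap.exact_iff.mp hexact)] at hB
  omega

theorem finiteDimensional_comap (f : V →ₗ[K] W) [FiniteDimensional K f.ker] (q : Submodule K W)
    [FiniteDimensional K q] : FiniteDimensional K (q.comap f) := by
  let g : q.comap f →ₗ[K] q := f.restrict fun _ hx => hx
  have : FiniteDimensional K g.ker := by
    rw [LinearMap.ker_restrict]
    exact (comapSubtypeEquivOfLe fun x hx => by simp [mem_ker.mp hx]).symm.finiteDimensional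
  have : FiniteDimensional K (q.comap f ⧸ g.ker) := g.quotKerEquivRange.symm.finiteDimensional
  exact Module.Finite.of_submodule_quotient g.ker

theorem finiteDimensional_ker_pow (f : Module.End K V) [FiniteDimensional K f.ker] (n : ℕ) :
    FiniteDimensional K (f ^ n).ker := by
  induction n with
  | zero => rw [pow_zero, Module.End.one_eq_id, LinearMap.ker_id]; infer_instance
  | succ n ih =>
    rw [pow_succ, Module.End.mul_eq_comp, LinearMap.ker_comp]
    exact finiteDimensional_comap f _

section Invariant

variable {f : Module.End K V} {R : Submodule K V} (hR : ∀ x ∈ R, f x ∈ R)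

noncomputable def kerMapQEquiv :
    (R.comap f ⧸ R.comap (R.comap f).subtype) ≃ₗ[K] (R.mapQ R f hR).ker :=
  let α := R.mkQ ∘ₗ (R.comap f).subtype
  (quotEquivOfEq _ _ (by simp only [α, ker_comp, ker_mkQ])).trans <| α.quotKerEquivRange.trans <|
    .ofEq _ _ (by rw [ker_mapQ, LinearMap.range_comp, range_subtype])

/-- Half of the snake lemma for `0 → R → V → V ⧸ R → 0`: when `R ≤ range f`, the sequence
`0 → ker (f|R) → ker f → ker (f mod R) → coker (f|R) → 0` is exact. -/
theorem finiteDimensional_ker_mapQ_and_finrank_add (hle : R ≤ f.range) [FiniteDimensional K f.ker]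
    [FiniteDimensional K (R ⧸ (f.restrict hR).range)] :
    FiniteDimensional K (R.mapQ R f hR).ker ∧
      finrank K (R.mapQ R f hR).ker + finrank K (f.restrict hR).ker =
        finrank K f.ker + finrank K (R ⧸ (f.restrict hR).range) := by
  set f₀ := f.restrict hR
  let P := R.comap f
  have hkerP : f.ker ≤ P := fun x hx => by simp [P, mem_ker.mp hx]
  let R' := R.comap P.subtype
  let D : P →ₗ[K] R ⧸ f₀.range := f₀.range.mkQ ∘ₗ f.restrict (p := P) (q := R) fun _ hx => hx
  have hD : R' ≤ D.ker := fun x hx => (Submodule.Quotient.mk_eq_zero _).mpr ⟨⟨x, hx⟩, rfl⟩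
  -- `P ⧸ R'` is `ker (f mod R)` by `kerMapQEquiv`, and `δ` is the connecting map `[x] ↦ [f x]`.
  let δ := R'.liftQ D hD
  let Γ := R'.mkQ ∘ₗ inclusion hkerP
  have hexact : Function.Exact Γ δ := by
    refine LinearMap.exact_iff.mpr (le_antisymm ?_ ?_)
    · rintro q hq
      induction q using Submodule.Quotient.induction_on with | _ x
      obtain ⟨r, hr⟩ := (Submodule.Quotient.mk_eq_zero _).mp hq
      have hfr : f (x - r) = 0 := by
        rw [map_sub, sub_eq_zero]; exact congrArg Subtype.val hr.symm
      refine ⟨⟨x - r, hfr⟩, (Submodule.Quotient.eq _).mpr ?_⟩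
      simp [R']
    · rintro _ ⟨k, rfl⟩
      exact (Submodule.Quotient.mk_eq_zero _).mpr ⟨0, Subtype.ext (by simp [mem_ker.mp k.2])⟩
  have hδ : Function.Surjective δ := by
    rintro q
    induction q using Submodule.Quotient.induction_on with | _ y
    obtain ⟨x, hx⟩ := hle y.2
    exact ⟨R'.mkQ ⟨x, show f x ∈ R from hx ▸ y.2⟩, congrArg _ (Subtype.ext hx)⟩
  have hΓ : finrank K Γ.ker = finrank K f₀.ker := by
    have : Γ.ker = R.comap f.ker.subtype := by
      simp only [Γ, R', ker_comp, ker_mkQ]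
      ext; rfl
    rw [this, LinearMap.ker_restrict, (equivSubtypeMap _ _).finrank_eq, map_comap_subtype,
      (equivSubtypeMap _ _).finrank_eq, map_comap_subtype, inf_comm]
  obtain ⟨_, hrank⟩ := finrank_add_finrank_ker_of_exact hexact hδ
  let e := kerMapQEquiv hR
  exact ⟨e.finiteDimensional, by rw [← e.finrank_eq, ← hΓ]; exact hrank⟩

theorem finiteDimensional_quotient_of_range_pow_le {n : ℕ} (hn : (f ^ n).range ≤ R)
    [FiniteDimensional K (R.mapQ R f hR).ker] : FiniteDimensional K (V ⧸ R) := by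
  have htop : ((R.mapQ R f hR) ^ n).ker = ⊤ := by
    rw [← mapQ_pow, eq_top_iff]
    rintro q -
    induction q using Submodule.Quotient.induction_on with | _ x
    exact (Submodule.Quotient.mk_eq_zero _).mpr (hn (LinearMap.mem_range_self _ x))
  have := finiteDimensional_ker_pow (R.mapQ R f hR) n
  rw [htop] at this
  exact topEquiv.finiteDimensional

theorem IsIndexZero.of_restrict (hle : R ≤ f.range) {n : ℕ} (hn : (f ^ n).range ≤ R)
    [FiniteDimensional K f.ker] (h₀ : IsIndexZero (f.restrict hR)) : IsIndexZero f := by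
  have := h₀.finiteDimensional_coker
  obtain ⟨_, hrank⟩ := finiteDimensional_ker_mapQ_and_finrank_add hR hle
  have := finiteDimensional_quotient_of_range_pow_le hR hn
  have hbar := IsIndexZero.of_finiteDimensional (R.mapQ R f hR)
  let e : ((V ⧸ R) ⧸ (R.mapQ R f hR).range) ≃ₗ[K] V ⧸ f.range :=
    (quotEquivOfEq _ _ (range_mapQ R R f hR)).trans (quotientQuotientEquivQuotient R f.range hle)
  refine ⟨inferInstance, e.finiteDimensional, ?_⟩
  rw [← e.finrank_eq, ← hbar.finrank_ker_eq]
  have := h₀.finrank_ker_eq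
  omega

end Invariant

end LinearAlgebra

section Banach

variable {𝕜 E F : Type*} [RCLike 𝕜] [NormedAddCommGroup E] [NormedSpace 𝕜 E] [CompleteSpace E]
  [NormedAddCommGroup F] [NormedSpace 𝕜 F] [CompleteSpace F]

theorem isClosed_range_of_finiteDimensional (f : E →L[𝕜] F) [FiniteDimensional 𝕜 f.ker]
    [FiniteDimensional 𝕜 (F ⧸ f.range)] : IsClosed (f.range : Set F) := by
  obtain ⟨M, hMc, hM⟩ :=
    (Submodule.ClosedComplemented.of_finiteDimensional f.ker).exists_isClosed_isCompl
  have : CompleteSpace M := hMc.completeSpace_coe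
  obtain ⟨G, hG⟩ := Submodule.exists_isCompl f.range
  have : FiniteDimensional 𝕜 G := (Submodule.quotientEquivOfIsCompl _ _ hG).finiteDimensional
  have hrange : (f ∘L M.subtypeL).range = f.range := by
    refine le_antisymm (fun _ ⟨x, hx⟩ => ⟨x, hx⟩) ?_
    rintro _ ⟨x, rfl⟩
    obtain ⟨k, hk, m, hm, rfl⟩ :=
      Submodule.mem_sup.mp (hM.sup_eq_top ▸ Submodule.mem_top : x ∈ f.ker ⊔ M)
    exact ⟨⟨m, hm⟩, by simpa using hk⟩
  have hker : (f ∘L M.subtypeL).ker = ⊥ := by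
    rw [LinearMap.ker_eq_bot']
    intro x hx
    have : (x : E) ∈ f.ker ⊓ M := ⟨hx, x.2⟩
    rw [hM.inf_eq_bot, Submodule.mem_bot] at this
    exact Subtype.ext this
  rw [← hrange] at hG ⊢
  exact (f ∘L M.subtypeL).closed_complemented_range_of_isCompl_of_ker_eq_bot G hG
    (Submodule.closed_of_finiteDimensional G) hker

theorem exists_isUnit_add_of_isIndexZero {W : E →L[𝕜] E} (hW : IsIndexZero (W : E →ₗ[𝕜] E)) :
    ∃ J : E →L[𝕜] E, FiniteDimensional 𝕜 (J : E →ₗ[𝕜] E).range ∧ IsUnit (W + J) := by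
  have := hW.finiteDimensional_ker
  have := hW.finiteDimensional_coker
  obtain ⟨N, hN⟩ := Submodule.exists_isCompl W.range
  have : FiniteDimensional 𝕜 N := (Submodule.quotientEquivOfIsCompl _ _ hN).finiteDimensional
  let ι : W.ker ≃ₗ[𝕜] N := .ofFinrankEq _ _
    (hW.finrank_ker_eq.trans (Submodule.quotientEquivOfIsCompl _ _ hN).finrank_eq)
  obtain ⟨P, hP⟩ := Submodule.ClosedComplemented.of_finiteDimensional W.ker
  refine ⟨N.subtypeL ∘L (ι.toContinuousLinearEquiv : W.ker →L[𝕜] N) ∘L P, ?_, ?_⟩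
  · exact Submodule.finiteDimensional_of_le (LinearMap.range_comp_le_range _ N.subtype)
  · rw [ContinuousLinearMap.isUnit_iff_isUnit_toLinearMap, Module.End.isUnit_iff]
    exact bijective_add_of_isCompl hN P hP ι

theorem IsIndexZero.eventually_sub_smul {W : E →L[𝕜] E} (hW : IsIndexZero (W : E →ₗ[𝕜] E)) :
    ∀ᶠ μ in 𝓝 (0 : 𝕜), IsIndexZero ((W - μ • 1 : E →L[𝕜] E) : E →ₗ[𝕜] E) := by
  obtain ⟨J, hJ, hunit⟩ := exists_isUnit_add_of_isIndexZero hW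
  have hcont : Continuous fun μ : 𝕜 => W + J - μ • (1 : E →L[𝕜] E) := by fun_prop
  have hunits : ∀ᶠ μ in 𝓝 (0 : 𝕜), IsUnit (W + J - μ • 1) :=
    hcont.continuousAt.eventually_mem (Units.isOpen.mem_nhds (by simpa using hunit))
  filter_upwards [hunits] with μ hμ
  rw [show W - μ • 1 = W + J - μ • 1 - J by abel, ContinuousLinearMap.toLinearMap_sub]
  exact IsUnit.isIndexZero_sub (ContinuousLinearMap.isUnit_iff_isUnit_toLinearMap.mp hμ) hJ

end Banach

theorem tendsto_sub_right_nhdsNE {G : Type*} [AddGroup G] [TopologicalSpace G]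
    [IsTopologicalAddGroup G] (a : G) : Tendsto (· - a) (𝓝[≠] a) (𝓝[≠] 0) :=
  tendsto_nhdsWithin_of_tendsto_nhds_of_eventually_within _
    (((continuous_sub_right a).tendsto' a 0 (sub_self a)).mono_left nhdsWithin_le_nhds)
    (eventually_nhdsWithin_of_forall fun _ h => sub_ne_zero.mpr h)

theorem mem_iso_of_eventually_notMem {S : Set ℂ} {z : ℂ} (hz : z ∈ S)
    (h : ∀ᶠ w in 𝓝[≠] z, w ∉ S) : z ∈ iso S :=
  ⟨hz, eventually_false_iff_eq_bot.mp <| eventually_nhdsWithin_iff.mpr <|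
    (eventually_nhdsWithin_iff.mp h).mono fun _ hw hwS => hw hwS.2 hwS.1⟩

section Operators

theorem isFredholm_and_fredIndex_eq_zero_iff (T : X →L[ℂ] X) :
    IsFredholm T ∧ fredIndex T = 0 ↔ IsIndexZero (T : X →ₗ[ℂ] X) := by
  refine ⟨fun ⟨⟨hk, _, hc⟩, h0⟩ => ⟨hk, hc, by unfold fredIndex at h0; omega⟩, fun h => ?_⟩
  have := h.finiteDimensional_ker
  have := h.finiteDimensional_coker
  exact ⟨⟨inferInstance, isClosed_range_of_finiteDimensional T, inferInstance⟩,
    by simp [fredIndex, h.finrank_ker_eq]⟩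

theorem IsIndexZero.isUpperSemiFredholm_and_indexLE0 {T : X →L[ℂ] X}
    (h : IsIndexZero (T : X →ₗ[ℂ] X)) :
    IsUpperSemiFredholm T ∧ indexLE0 T := by
  have := h.finiteDimensional_coker
  obtain ⟨⟨hk, hr, -⟩, -⟩ := (isFredholm_and_fredIndex_eq_zero_iff T).mpr h
  exact ⟨⟨hk, hr⟩, by rw [indexLE0, ← Module.finrank_eq_rank, h.finrank_ker_eq]⟩

theorem isUpperSemiFredholm_sub_smul_of_notMem_aspectrum {T : X →L[ℂ] X} {z : ℂ}
    (hz : z ∉ aspectrum T) : IsUpperSemiFredholm (T - z • 1) := by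
  obtain ⟨c, hc, hbound⟩ := not_not.mp hz
  have hanti : AntilipschitzWith ⟨c⁻¹, by positivity⟩ (T - z • (1 : X →L[ℂ] X)) :=
    ContinuousLinearMap.antilipschitz_of_bound _ fun x => by
      show ‖x‖ ≤ c⁻¹ * _
      rw [inv_mul_eq_div, le_div_iff₀ hc, mul_comm]
      exact hbound x
  have hker : ((T - z • 1 : X →L[ℂ] X) : X →ₗ[ℂ] X).ker = ⊥ :=
    LinearMap.ker_eq_bot.mpr hanti.injective
  refine ⟨by rw [hker]; infer_instance, ?_⟩
  rw [LinearMap.coe_range]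
  exact hanti.isClosed_range (T - z • 1).uniformContinuous

omit [CompleteSpace X] in
theorem isBWeyl_iff (T : X →L[ℂ] X) :
    IsBWeyl T ↔ ∃ n : ℕ, IsClosed (((T ^ n : X →L[ℂ] X) : X →ₗ[ℂ] X).range : Set X) ∧
      IsClosed ((restr T n).range : Set (((T ^ n : X →L[ℂ] X) : X →ₗ[ℂ] X).range)) ∧
      IsIndexZero (restr T n) :=
  ⟨fun ⟨n, h1, h2, h3, h4, h5⟩ => ⟨n, h1, h3, h2, h4, h5⟩,
    fun ⟨n, h1, h3, h2, h4, h5⟩ => ⟨n, h1, h2, h3, h4, h5⟩⟩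

omit [CompleteSpace X] in
theorem IsBWeyl.isUpperBWeyl {T : X →L[ℂ] X} (h : IsBWeyl T) : IsUpperBWeyl T := by
  obtain ⟨n, h1, h2, h3, h4, h5⟩ := h
  exact ⟨n, h1, h2, h3, by rw [← Module.finrank_eq_rank, h5]⟩

omit [CompleteSpace X] in
theorem range_pow_zero (T : X →L[ℂ] X) : ((T ^ 0 : X →L[ℂ] X) : X →ₗ[ℂ] X).range = ⊤ := by
  rw [pow_zero, ContinuousLinearMap.toLinearMap_one, Module.End.one_eq_id, LinearMap.range_id]

omit [CompleteSpace X] in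
theorem isIndexZero_restr_zero_iff (T : X →L[ℂ] X) :
    IsIndexZero (restr T 0) ↔ IsIndexZero (T : X →ₗ[ℂ] X) :=
  isIndexZero_restrict_iff _ (fun x _ => range_pow_zero T ▸ Submodule.mem_top)
    (by rw [range_pow_zero, top_sup_eq])

theorem isBWeyl_of_isIndexZero {T : X →L[ℂ] X} (h : IsIndexZero (T : X →ₗ[ℂ] X)) :
    IsBWeyl T := by
  have := h.finiteDimensional_ker
  have := h.finiteDimensional_coker
  refine (isBWeyl_iff T).mpr ⟨0, by simp only [range_pow_zero, Submodule.top_coe, isClosed_univ],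
    ?_, (isIndexZero_restr_zero_iff T).mpr h⟩
  rw [restr, LinearMap.range_restrict, range_pow_zero, Submodule.map_top]
  exact (isClosed_range_of_finiteDimensional T).preimage continuous_subtype_val

omit [CompleteSpace X] in
theorem isIndexZero_of_isUpperSemiFredholm_of_isBWeyl {T : X →L[ℂ] X}
    (hu : IsUpperSemiFredholm T) (hB : IsBWeyl T) : IsIndexZero (T : X →ₗ[ℂ] X) := by
  have := hu.1
  obtain ⟨n, -, -, h₀⟩ := (isBWeyl_iff T).mp hB
  cases n with
  | zero => exact (isIndexZero_restr_zero_iff T).mp h₀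
  | succ m =>
    have hpow : ((T ^ (m + 1) : X →L[ℂ] X) : X →ₗ[ℂ] X) = (T : X →ₗ[ℂ] X) ^ (m + 1) :=
      ContinuousLinearMap.toLinearMap_pow T (m + 1)
    refine IsIndexZero.of_restrict _ ?_ (congrArg LinearMap.range hpow).ge h₀
    rw [hpow, pow_succ', Module.End.mul_eq_comp]
    exact LinearMap.range_comp_le_range _ _

theorem IsBWeyl.eventually_isIndexZero_sub_smul {S : X →L[ℂ] X} (hB : IsBWeyl S) :
    ∀ᶠ μ in 𝓝[≠] (0 : ℂ), IsIndexZero ((S - μ • 1 : X →L[ℂ] X) : X →ₗ[ℂ] X) := by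
  obtain ⟨n, hR, -, h₀⟩ := (isBWeyl_iff S).mp hB
  set R := ((S ^ n : X →L[ℂ] X) : X →ₗ[ℂ] X).range
  have hpow : R = ((S : X →ₗ[ℂ] X) ^ n).range :=
    congrArg LinearMap.range (ContinuousLinearMap.toLinearMap_pow S n)
  have hSR : ∀ x ∈ R, S x ∈ R := fun x hx => (restr S n ⟨x, hx⟩).2
  have hSμR : ∀ μ : ℂ, ∀ x ∈ R, (S - μ • 1) x ∈ R := fun μ x hx =>
    sub_mem (hSR x hx) (R.smul_mem μ hx)
  have : CompleteSpace R := hR.completeSpace_coe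
  have hstab := (show IsIndexZero (S.restrict hSR : R →ₗ[ℂ] R) from h₀).eventually_sub_smul
  filter_upwards [hstab.filter_mono nhdsWithin_le_nhds, self_mem_nhdsWithin] with μ hμ hμ0
  have hcoe : ((S - μ • 1 : X →L[ℂ] X) : X →ₗ[ℂ] X) = (S : X →ₗ[ℂ] X) - μ • 1 := by
    rw [ContinuousLinearMap.toLinearMap_sub, ContinuousLinearMap.toLinearMap_smul,
      ContinuousLinearMap.toLinearMap_one]
  -- `S` is nilpotent modulo `R`, so `S - μ` is bijective modulo `R`.
  refine (isIndexZero_restrict_iff (hSμR μ) (fun x hx => ?_) ?_).mp ?_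
  · rw [hcoe, hpow] at hx
    rw [hpow]
    exact mem_range_pow_of_sub_smul_mem _ n hμ0 hx
  · rw [hcoe, hpow]
    exact range_pow_sup_range_sub_smul _ n hμ0
  · have : (S - μ • 1).restrict (hSμR μ) = S.restrict hSR - μ • 1 := by ext; rfl
    rwa [← ContinuousLinearMap.toLinearMap_restrict, this]

theorem mem_iso_aweylSpec_of_isBWeyl {A : X →L[ℂ] X} {z : ℂ} (hz : z ∈ aweylSpec A)
    (hB : IsBWeyl (A - z • 1)) : z ∈ iso (aweylSpec A) := by
  refine mem_iso_of_eventually_notMem hz <| ((tendsto_sub_right_nhdsNE z).eventually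
    hB.eventually_isIndexZero_sub_smul).mono fun w hw hwS => hwS.2 ?_
  rw [sub_smul, sub_sub_sub_cancel_right] at hw
  exact hw.isUpperSemiFredholm_and_indexLE0

end Operators

/-- `Φ^iso_uBw(A) = ∅` implies `σ_w(A) = σ_Bw(A)`. -/
theorem weylSpec_eq_bweylSpec_of_phiIsoUBw_empty (A : X →L[ℂ] X)
    (h : phiIsoUBw A = ∅) : weylSpec A = bweylSpec A := by
  ext z
  simp only [weylSpec, bweylSpec, Set.mem_ofPred_eq, isFredholm_and_fredIndex_eq_zero_iff]
  refine ⟨fun ⟨hz, hW⟩ => ⟨hz, fun hB => ?_⟩,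
    fun ⟨hz, hB⟩ => ⟨hz, fun hW => hB (isBWeyl_of_isIndexZero hW)⟩⟩
  by_cases hu : IsUpperSemiFredholm (A - z • 1)
  · exact hW (isIndexZero_of_isUpperSemiFredholm_of_isBWeyl hu hB)
  · have hz' : z ∈ aweylSpec A :=
      ⟨not_not.mp fun ha => hu (isUpperSemiFredholm_sub_smul_of_notMem_aspectrum ha),
        fun h' => hu h'.1⟩
    have : z ∈ phiIsoUBw A := ⟨mem_iso_aweylSpec_of_isBWeyl hz' hB, fun h' => h'.2 hB.isUpperBWeyl⟩
    simp [h] at this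

end Paper
end

section
/- Let A ∈ B(X) be an operator with no eigenvalues and let f be holomorphic in a neighbourhood of σ(A) and non-constant on each connected component of σ(A). Then f(A) has no eigenvalues. -/
/-!
Put `g = f - λ`. As `f` is non-constant on every component of `σ(A)`, `g` has finite order at
each point of `σ(A)`, so it has only finitely many zeros on the compact set `σ(A)`. Dividing them
out one at a time, `g = (z - μ)ⁿ h` with `h` analytic and `h μ ≠ 0` gives
`g(A) = (A - μ)ⁿ h(A)`, where `(A - μ)ⁿ` is injective because `A` has no eigenvalues; once no
zero is left, `h(A)` is invertible by the spectral mapping theorem.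
-/

open Filter Metric Set Asymptotics Topology

namespace Paper

variable {X : Type*} [NormedAddCommGroup X] [NormedSpace ℂ X] [CompleteSpace X]

theorem _root_.AnalyticOnNhd.exists_eq_pow_sub_mul {𝕜 : Type*} [NontriviallyNormedField 𝕜]
    {U : Set 𝕜} {g : 𝕜 → 𝕜} {μ : 𝕜} (hg : AnalyticOnNhd 𝕜 g U) (hμ : μ ∈ U)
    (hord : analyticOrderAt g μ ≠ ⊤) :
    ∃ (n : ℕ) (h : 𝕜 → 𝕜), AnalyticOnNhd 𝕜 h U ∧ h μ ≠ 0 ∧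
      g = (fun z => (z - μ) ^ n) * h := by
  classical
  obtain ⟨n, hn⟩ := ENat.ne_top_iff_exists.mp hord
  obtain ⟨h₀, hh₀, hh₀μ, hg_eq⟩ := (hg μ hμ).analyticOrderAt_eq_natCast.mp hn.symm
  set h := Function.update (fun z => g z / (z - μ) ^ n) μ (h₀ μ)
  have h_ne : ∀ z ≠ μ, h z = g z / (z - μ) ^ n := fun z hz => Function.update_of_ne hz _ _
  have h_self : h μ = h₀ μ := Function.update_self _ _ _
  refine ⟨n, h, fun z hz => ?_, h_self ▸ hh₀μ, ?_⟩
  · rcases eq_or_ne z μ with rfl | hzμ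
    · refine hh₀.congr ?_
      filter_upwards [hg_eq] with w hw
      rcases eq_or_ne w z with rfl | hwz
      · exact h_self.symm
      · rw [h_ne w hwz, hw, smul_eq_mul,
          mul_div_cancel_left₀ _ (pow_ne_zero _ (sub_ne_zero.mpr hwz))]
    · refine ((hg z hz).div ((analyticAt_id.sub analyticAt_const).pow n)
        (pow_ne_zero _ (sub_ne_zero.mpr hzμ))).congr ?_
      filter_upwards [isOpen_compl_singleton.mem_nhds hzμ] with w hw
      exact (h_ne w hw).symm
  · funext z
    rcases eq_or_ne z μ with rfl | hzμ
    · simpa [h_self] using hg_eq.self_of_nhds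
    · rw [Pi.mul_apply, h_ne z hzμ, mul_div_cancel₀ _ (pow_ne_zero _ (sub_ne_zero.mpr hzμ))]

theorem _root_.AnalyticOnNhd.finite_zeros_of_isCompact {𝕜 E : Type*} [NontriviallyNormedField 𝕜]
    [NormedAddCommGroup E] [NormedSpace 𝕜 E] {U K : Set 𝕜} {g : 𝕜 → E}
    (hg : AnalyticOnNhd 𝕜 g U) (hK : IsCompact K) (hKU : K ⊆ U)
    (hord : ∀ z ∈ K, analyticOrderAt g z ≠ ⊤) : {z ∈ K | g z = 0}.Finite := by
  refine Set.not_infinite.mp fun hinf => ?_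
  obtain ⟨z, hzK, hacc⟩ := hinf.exists_accPt_of_subset_isCompact hK (sep_subset _ _)
  have hfreq : ∃ᶠ w in 𝓝[≠] z, g w = 0 :=
    (accPt_iff_frequently_nhdsNE.mp hacc).mono fun _ hw => hw.2
  exact hord z hzK (analyticOrderAt_eq_top.mpr
    ((hg z (hKU hzK)).frequently_zero_iff_eventually_zero.mp hfreq))

section

omit [CompleteSpace X]

theorem NonConstOnSpecComponents.analyticOrderAt_sub_ne_top {A : X →L[ℂ] X} {f : ℂ → ℂ}
    {U : Set ℂ} (hnc : NonConstOnSpecComponents A f) (hf : AnalyticOnNhd ℂ f U)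
    (hσU : spectrum ℂ A ⊆ U) (c : ℂ) {z : ℂ} (hz : z ∈ spectrum ℂ A) :
    analyticOrderAt (fun w => f w - c) z ≠ ⊤ := by
  intro hz_top
  obtain ⟨w, hw, hfw⟩ := hnc z hz
  have h_eq_of_top : ∀ {v}, analyticOrderAt (fun w => f w - c) v = ⊤ → f v = c := fun hv =>
    sub_eq_zero.mp (analyticOrderAt_eq_top.mp hv).self_of_nhds
  have hg : AnalyticOnNhd ℂ (fun w => f w - c) (connectedComponentIn U z) :=
    (hf.sub analyticOnNhd_const).mono (connectedComponentIn_subset U z)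
  have hw_top : analyticOrderAt (fun w => f w - c) w = ⊤ := by
    by_contra hw_ne_top
    exact hg.analyticOrderAt_ne_top_of_isPreconnected isPreconnected_connectedComponentIn
      (connectedComponentIn_mono z hσU hw) (mem_connectedComponentIn (hσU hz)) hw_ne_top hz_top
  exact hfw ((h_eq_of_top hw_top).trans (h_eq_of_top hz_top).symm)

namespace HoloCalcOn

variable {A : X →L[ℂ] X} {U : Set ℂ} (Φ : HoloCalcOn A U)

theorem toFun_sub_const {f : ℂ → ℂ} (hf : AnalyticOnNhd ℂ f U) (c : ℂ) :
    Φ.toFun (fun w => f w - c) = Φ.toFun f - c • 1 := by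
  have hsplit : (fun w => f w - c) = f + (-c) • fun _ => (1 : ℂ) := by
    funext w; simp [sub_eq_add_neg]
  have hconst : AnalyticOnNhd ℂ ((-c) • fun _ => (1 : ℂ)) U :=
    analyticOnNhd_const.const_smul
  rw [hsplit, Φ.map_add _ _ hf hconst,
    Φ.map_smul _ _ analyticOnNhd_const, Φ.map_one, neg_smul, ← sub_eq_add_neg]

theorem toFun_pow_sub_const (μ : ℂ) (n : ℕ) :
    Φ.toFun (fun w => (w - μ) ^ n) = (A - μ • 1) ^ n := by
  induction n with
  | zero => simpa using Φ.map_one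
  | succ n ih =>
    have hlin : AnalyticOnNhd ℂ (fun w : ℂ => w - μ) U := analyticOnNhd_id.sub analyticOnNhd_const
    have hsplit : (fun w : ℂ => (w - μ) ^ (n + 1)) = (fun w => (w - μ) ^ n) * fun w => w - μ := by
      funext w; simp [pow_succ]
    have hA : Φ.toFun (fun w => w - μ) = A - μ • 1 := by
      have h := Φ.toFun_sub_const (f := id) analyticOnNhd_id μ
      rwa [Φ.map_id] at h
    rw [hsplit, Φ.map_mul (fun w => (w - μ) ^ n) _ (hlin.pow n) hlin, ih, hA, pow_succ]

theorem isUnit_toFun {g : ℂ → ℂ} (hg : AnalyticOnNhd ℂ g U)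
    (hne : ∀ z ∈ spectrum ℂ A, g z ≠ 0) : IsUnit (Φ.toFun g) := by
  rw [← spectrum.zero_notMem_iff ℂ, Φ.spec_map g hg]
  rintro ⟨z, hz, hgz⟩
  exact hne z hz hgz

theorem injective_toFun_of_zeros_subset [CompleteSpace X]
    (hA : ∀ μ : ℂ, Function.Injective (A - μ • 1 : X →L[ℂ] X))
    (Z : Finset ℂ) (g : ℂ → ℂ) (hg : AnalyticOnNhd ℂ g U)
    (hord : ∀ z ∈ spectrum ℂ A, analyticOrderAt g z ≠ ⊤)
    (hZ : {z ∈ spectrum ℂ A | g z = 0} ⊆ Z) : Function.Injective (Φ.toFun g) := by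
  induction Z using Finset.induction_on generalizing g with
  | empty =>
    refine (ContinuousLinearMap.isUnit_iff_bijective.mp (Φ.isUnit_toFun hg ?_)).injective
    exact fun z hz hgz => by simpa using hZ ⟨hz, hgz⟩
  | insert μ Z _ ih =>
    by_cases hμ : μ ∈ spectrum ℂ A
    · obtain ⟨n, h, hh, hhμ, rfl⟩ := hg.exists_eq_pow_sub_mul (Φ.spec_subset hμ) (hord μ hμ)
      have hpow : AnalyticOnNhd ℂ (fun w : ℂ => (w - μ) ^ n) U :=
        (analyticOnNhd_id.sub analyticOnNhd_const).pow n
      rw [Φ.map_mul _ _ hpow hh, Φ.toFun_pow_sub_const, FunLike.coe_mul_eq_comp,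
        FunLike.coe_pow_eq_iterate]
      refine ((hA μ).iterate n).comp (ih h hh ?_ ?_)
      · exact fun z hz htop => hord z hz (analyticOrderAt_mul_eq_top_of_right htop)
      · rintro z ⟨hz, hhz⟩
        have hzμ : z ≠ μ := by rintro rfl; exact hhμ hhz
        exact (Finset.mem_insert.mp (hZ ⟨hz, by simp [hhz]⟩)).resolve_left hzμ
    · refine ih g hg hord fun z ⟨hz, hgz⟩ => ?_
      exact (Finset.mem_insert.mp (hZ ⟨hz, hgz⟩)).resolve_left (by rintro rfl; exact hμ hz)

end HoloCalcOn

end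

/-- if `A` has no eigenvalues, then neither does `f(A)`. -/
theorem no_eigenvalues_holoCalc (A : X →L[ℂ] X)
    (hA : ∀ (z : ℂ) (x : X), A x = z • x → x = 0)
    (U : Set ℂ) (Φ : HoloCalcOn A U) (f : ℂ → ℂ) (hf : AnalyticOnNhd ℂ f U)
    (hnc : NonConstOnSpecComponents A f) :
    ∀ (z : ℂ) (x : X), Φ.toFun f x = z • x → x = 0 := by
  intro z x hx
  have hA_inj : ∀ μ : ℂ, Function.Injective (A - μ • 1 : X →L[ℂ] X) := fun μ =>
    (injective_iff_map_eq_zero _).mpr fun x hx => hA μ x (by simpa [sub_eq_zero] using hx)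
  have hg : AnalyticOnNhd ℂ (fun w => f w - z) U := hf.sub analyticOnNhd_const
  have hord : ∀ w ∈ spectrum ℂ A, analyticOrderAt (fun w => f w - z) w ≠ ⊤ :=
    fun w hw => hnc.analyticOrderAt_sub_ne_top hf Φ.spec_subset z hw
  have hfin := hg.finite_zeros_of_isCompact (spectrum.isCompact A) Φ.spec_subset hord
  have hinj := Φ.injective_toFun_of_zeros_subset hA_inj hfin.toFinset _ hg hord
    hfin.coe_toFinset.superset
  rw [Φ.toFun_sub_const hf] at hinj
  exact hinj (by simp [hx])

end Paper
end
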